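/- arXiv:1909.05679 — 5 statements merged into one kernel-verified Lean document; each statement's English description precedes it below -/
import Mathlib

section
/- Let b_min > 0, c₂ > 0, b_max ≥ 0, BW_max ≥ 0, and let α₁, β₁, c₁ be real constants. Let F : ℝ → ℝ → ℝ (the service-guarantee function, F b BW being the probability the delivered rate meets the advertised rate b when bandwidth BW is allocated) be such that for every b the map BW ↦ F b BW is continuous on [0, BW_max] and F b 0 = 0. Define the feasible set C = {(b, BW) : 0 ≤ b ≤ b_max ∧ 0 ≤ BW ≤ BW_max ∧ b · F b BW ≥ b_min} and the service-provider utility U(b, BW) = α₁ · b^{β₁} − (c₁ · b + c₂ · BW). If (b*, BW*) ∈ C and U(b*, BW*) ≥ U(b, BW) for all (b, BW) ∈ C (i.e., (b*, BW*) is a maximizer of U over C), then b* · F b* BW* = b_min; that is, the minimum data-rate constraint is satisfied with equality at the optimum. -/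
/-! If the rate constraint were slack at the optimum, then, since the delivered rate
`BW ↦ b* · F b* BW` is continuous and vanishes at `BW = 0`, the intermediate value theorem
gives a strictly smaller bandwidth at which the constraint is still met. That bid is feasible
and, as the cost `c₂ · BW` is strictly increasing, strictly more profitable. -/

open Set

theorem exists_mem_Ico_mul_eq_of_lt_mul {f : ℝ → ℝ} {b r x : ℝ}
    (hf : ContinuousOn f (Icc 0 x)) (hf0 : f 0 = 0) (hx : 0 ≤ x) (hr : 0 ≤ r)
    (hlt : r < b * f x) : ∃ y ∈ Ico 0 x, b * f y = r :=
  intermediate_value_Ico hx (continuousOn_const.mul hf) ⟨by simpa [hf0] using hr, hlt⟩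

theorem sp_optimal_bid_rate_constraint_tight_general
    (b_min c₂ b_max BW_max α₁ β₁ c₁ : ℝ)
    (hbmin : 0 < b_min) (hc₂ : 0 < c₂)
    (F : ℝ → ℝ → ℝ)
    (hFcont : ∀ b, ContinuousOn (fun BW => F b BW) (Set.Icc 0 BW_max))
    (hF0 : ∀ b, F b 0 = 0)
    (C : Set (ℝ × ℝ))
    (hC : C = {p : ℝ × ℝ |
      0 ≤ p.1 ∧ p.1 ≤ b_max ∧ 0 ≤ p.2 ∧ p.2 ≤ BW_max ∧ b_min ≤ p.1 * F p.1 p.2})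
    (U : ℝ → ℝ → ℝ)
    (hU : ∀ b BW, U b BW = α₁ * b ^ β₁ - (c₁ * b + c₂ * BW))
    (bstar BWstar : ℝ)
    (hmem : (bstar, BWstar) ∈ C)
    (hopt : ∀ p ∈ C, U p.1 p.2 ≤ U bstar BWstar) :
    bstar * F bstar BWstar = b_min := by
  rw [hC] at hmem hopt
  obtain ⟨hb0, hbmax, hBW0, hBWmax, hrate⟩ := hmem
  refine le_antisymm (not_lt.1 fun hslack => ?_) hrate
  obtain ⟨BW, ⟨hBW0', hBWlt⟩, hBWrate⟩ :=
    exists_mem_Ico_mul_eq_of_lt_mul ((hFcont bstar).mono (Icc_subset_Icc_right hBWmax))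
      (hF0 bstar) hBW0 hbmin.le hslack
  have hle := hopt (bstar, BW) ⟨hb0, hbmax, hBW0', hBWlt.le.trans hBWmax, hBWrate.ge⟩
  rw [hU, hU] at hle
  linarith [mul_lt_mul_of_pos_left hBWlt hc₂]

/-- Theorem 1 of the paper: at a maximizer of the service-provider utility over the
feasible bid set, the minimum data-rate constraint is tight. -/
theorem sp_optimal_bid_rate_constraint_tight
    (b_min c₂ b_max BW_max α₁ β₁ c₁ : ℝ)
    (hbmin : 0 < b_min) (hc₂ : 0 < c₂) (hbmax : 0 ≤ b_max) (hBWmax : 0 ≤ BW_max)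
    (F : ℝ → ℝ → ℝ)
    (hFcont : ∀ b, ContinuousOn (fun BW => F b BW) (Set.Icc 0 BW_max))
    (hF0 : ∀ b, F b 0 = 0)
    (C : Set (ℝ × ℝ))
    (hC : C = {p : ℝ × ℝ |
      0 ≤ p.1 ∧ p.1 ≤ b_max ∧ 0 ≤ p.2 ∧ p.2 ≤ BW_max ∧ b_min ≤ p.1 * F p.1 p.2})
    (U : ℝ → ℝ → ℝ)
    (hU : ∀ b BW, U b BW = α₁ * b ^ β₁ - (c₁ * b + c₂ * BW))
    (bstar BWstar : ℝ)
    (hmem : (bstar, BWstar) ∈ C)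
    (hopt : ∀ p ∈ C, U p.1 p.2 ≤ U bstar BWstar) :
    bstar * F bstar BWstar = b_min :=
  sp_optimal_bid_rate_constraint_tight_general b_min c₂ b_max BW_max α₁ β₁ c₁ hbmin hc₂ F hFcont hF0
    C hC U hU bstar BWstar hmem hopt
end

section
/- Let r : ℝ → ℝ and constants c₁, c₂ ∈ ℝ with c₂ ≥ 0 be such that the map b ↦ r b − c₁ · b is monotone nondecreasing. Let d : ℝ × ℝ → Bool be a user decision function and define the reward R(b, BW) = if d (b, BW) then r b − c₁ · b − c₂ · BW else 0. Suppose d (b_j, BW_j) = true (the user accepts bid (b_j, BW_j)), and let (b_k, BW_k) satisfy b_k ≤ b_j and BW_k ≥ BW_j (so bid (b_j, BW_j) Pareto dominates bid (b_k, BW_k) from the provider's perspective). Then max (R (b_k, BW_k)) 0 ≤ max (R (b_j, BW_j)) 0. -/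
lemma ite_le_max_zero {α : Type*} [LinearOrder α] [Zero α] (p : Prop) [Decidable p] {u v : α}
    (h : u ≤ v) : (if p then u else 0) ≤ max v 0 := by
  split_ifs
  · exact le_max_of_le_left h
  · exact le_max_right v 0

/-- Soundness of the accept-case pruning rule of the DPOB algorithm:
if the user accepts bid (b_j, BW_j), then every bid it Pareto dominates from the
provider's perspective achieves no larger nonnegative reward. -/
theorem dpob_accept_prune_sound
    (r : ℝ → ℝ) (c₁ c₂ : ℝ) (hc₂ : 0 ≤ c₂)
    (hmono : Monotone (fun b => r b - c₁ * b))
    (d : ℝ × ℝ → Bool)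
    (R : ℝ × ℝ → ℝ)
    (hR : ∀ b BW, R (b, BW) = if d (b, BW) then r b - c₁ * b - c₂ * BW else 0)
    (bj BWj bk BWk : ℝ)
    (hacc : d (bj, BWj) = true)
    (hb : bk ≤ bj) (hBW : BWj ≤ BWk) :
    max (R (bk, BWk)) 0 ≤ max (R (bj, BWj)) 0 := by
  have hutility : r bk - c₁ * bk - c₂ * BWk ≤ r bj - c₁ * bj - c₂ * BWj :=
    sub_le_sub (hmono hb) (mul_le_mul_of_nonneg_left hBW hc₂)
  have hk : R (bk, BWk) ≤ max (R (bj, BWj)) 0 := by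
    rw [hR bk BWk, hR bj BWj, if_pos hacc]
    exact ite_le_max_zero _ hutility
  exact max_le hk (le_max_right _ _)
end

section
/- Let S be a finite nonempty set of pairs (b, BW) ∈ ℝ × ℝ. Let d : ℝ × ℝ → Bool satisfy the rationality property (if d (b, BW) = false, b' ≥ b, and BW' ≤ BW then d (b', BW') = false), let r : ℝ → ℝ and c₁, c₂ ∈ ℝ with c₂ ≥ 0 and with b ↦ r b − c₁ · b monotone nondecreasing, and define R(b, BW) = if d (b, BW) then r b − c₁ · b − c₂ · BW else 0. Suppose s* ∈ S maximizes max (R s) 0 over s ∈ S, and suppose s_j ∈ S is such that s* would be pruned upon visiting s_j, i.e., either (d s_j = true and b_{s*} ≤ b_{s_j} and BW_{s*} ≥ BW_{s_j}) or (d s_j = false and b_{s*} ≥ b_{s_j} and BW_{s*} ≤ BW_{s_j}). Then max (R s_j) 0 = max (R s*) 0; that is, the visited state s_j already achieves the optimal nonnegative reward. -/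
/-!
If the pruning state `s_j` is accepted and dominates `s*` (no lower rate, no more bandwidth), then
`s*` is accepted too by rationality of the user, and its utility is no larger because
`b ↦ r b - c₁ b` is monotone and `c₂ ≥ 0`. If `s_j` is rejected and `s*` asks for no lower rate and
no less bandwidth, then `s*` is rejected as well and earns `0`. Either way optimality of `s*`
forces equality.
-/

def bidReward (d : ℝ × ℝ → Bool) (r : ℝ → ℝ) (c₁ c₂ : ℝ) (s : ℝ × ℝ) : ℝ :=
  if d s then r s.1 - c₁ * s.1 - c₂ * s.2 else 0

section Rational

variable {d : ℝ × ℝ → Bool}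
  (hrat : ∀ b BW b' BW', d (b, BW) = false → b ≤ b' → BW' ≤ BW → d (b', BW') = false)
include hrat

theorem decision_eq_true_of_le_of_accepted {s t : ℝ × ℝ} (ht : d t = true)
    (h₁ : s.1 ≤ t.1) (h₂ : t.2 ≤ s.2) : d s = true := by
  by_contra hs
  simpa [ht] using hrat s.1 s.2 t.1 t.2 (by simpa using hs) h₁ h₂

theorem bidReward_le_of_le_of_accepted {r : ℝ → ℝ} {c₁ c₂ : ℝ} (hc₂ : 0 ≤ c₂)
    (hmono : Monotone fun b => r b - c₁ * b) {s t : ℝ × ℝ} (ht : d t = true)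
    (h₁ : s.1 ≤ t.1) (h₂ : t.2 ≤ s.2) : bidReward d r c₁ c₂ s ≤ bidReward d r c₁ c₂ t := by
  have hs : d s = true := decision_eq_true_of_le_of_accepted hrat ht h₁ h₂
  have hrate : r s.1 - c₁ * s.1 ≤ r t.1 - c₁ * t.1 := hmono h₁
  have hcost : c₂ * t.2 ≤ c₂ * s.2 := mul_le_mul_of_nonneg_left h₂ hc₂
  simp only [bidReward, hs, ht, if_true]
  linarith

theorem bidReward_eq_zero_of_le_of_rejected (r : ℝ → ℝ) (c₁ c₂ : ℝ) {s t : ℝ × ℝ}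
    (ht : d t = false) (h₁ : t.1 ≤ s.1) (h₂ : s.2 ≤ t.2) : bidReward d r c₁ c₂ s = 0 := by
  have hs : d s = false := hrat t.1 t.2 s.1 s.2 ht h₁ h₂
  simp [bidReward, hs]

end Rational

theorem dpob_pruned_optimum_already_achieved_general
    (S : Finset (ℝ × ℝ))
    (d : ℝ × ℝ → Bool)
    (hrat : ∀ b BW b' BW', d (b, BW) = false → b ≤ b' → BW' ≤ BW → d (b', BW') = false)
    (r : ℝ → ℝ) (c₁ c₂ : ℝ) (hc₂ : 0 ≤ c₂)
    (hmono : Monotone (fun b => r b - c₁ * b))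
    (R : ℝ × ℝ → ℝ)
    (hR : ∀ b BW, R (b, BW) = if d (b, BW) then r b - c₁ * b - c₂ * BW else 0)
    (sstar : ℝ × ℝ)
    (hopt : ∀ s ∈ S, max (R s) 0 ≤ max (R sstar) 0)
    (sj : ℝ × ℝ) (hsj : sj ∈ S)
    (hprune : (d sj = true ∧ sstar.1 ≤ sj.1 ∧ sj.2 ≤ sstar.2) ∨
              (d sj = false ∧ sj.1 ≤ sstar.1 ∧ sstar.2 ≤ sj.2)) :
    max (R sj) 0 = max (R sstar) 0 := by
  obtain rfl : R = bidReward d r c₁ c₂ := funext fun s => hR s.1 s.2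
  refine le_antisymm (hopt sj hsj) ?_
  rcases hprune with ⟨haccept, hb, hbw⟩ | ⟨hreject, hb, hbw⟩
  · exact max_le_max_right 0 (bidReward_le_of_le_of_accepted hrat hc₂ hmono haccept hb hbw)
  · rw [bidReward_eq_zero_of_le_of_rejected hrat r c₁ c₂ hreject hb hbw, max_self]
    exact le_max_right _ _

/-- Correctness part of Theorem 2: an optimal state is only ever pruned by a visited
state whose recorded nonnegative reward already equals the optimum. -/
theorem dpob_pruned_optimum_already_achieved
    (S : Finset (ℝ × ℝ)) (hS : S.Nonempty)
    (d : ℝ × ℝ → Bool)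
    (hrat : ∀ b BW b' BW', d (b, BW) = false → b ≤ b' → BW' ≤ BW → d (b', BW') = false)
    (r : ℝ → ℝ) (c₁ c₂ : ℝ) (hc₂ : 0 ≤ c₂)
    (hmono : Monotone (fun b => r b - c₁ * b))
    (R : ℝ × ℝ → ℝ)
    (hR : ∀ b BW, R (b, BW) = if d (b, BW) then r b - c₁ * b - c₂ * BW else 0)
    (sstar : ℝ × ℝ) (hsstar : sstar ∈ S)
    (hopt : ∀ s ∈ S, max (R s) 0 ≤ max (R sstar) 0)
    (sj : ℝ × ℝ) (hsj : sj ∈ S)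
    (hprune : (d sj = true ∧ sstar.1 ≤ sj.1 ∧ sj.2 ≤ sstar.2) ∨
              (d sj = false ∧ sj.1 ≤ sstar.1 ∧ sstar.2 ≤ sj.2)) :
    max (R sj) 0 = max (R sstar) 0 :=
  dpob_pruned_optimum_already_achieved_general S d hrat r c₁ c₂ hc₂ hmono R hR sstar hopt sj hsj
    hprune
end

section
/- Let α ∈ (0, 1) and define the Prelec probability weighting function w : ℝ → ℝ by w p = Real.exp (−(−Real.log p) ^ α). Then w is concave on the interval (0, Real.exp (−1)): for all p, q in (0, e⁻¹) and all t ∈ [0, 1], w (t·p + (1−t)·q) ≥ t · w p + (1−t) · w q. -/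
/-!
Writing `u = -log p`, which is `≥ 1` exactly when `p ≤ 1/e`, the second derivative of
`w p = exp (-u ^ α)` is `α w u^α (α u^α + 1 - α - u) / (u p)²`. Its sign is that of
`α u^α + 1 - α - u`, which is nonpositive for `u ≥ 1` because `α u^α ≤ α u ≤ u + α - 1`.
-/

open Real Set

noncomputable section

def prelec (α p : ℝ) : ℝ := exp (-(-log p) ^ α)

def prelecDeriv (α p : ℝ) : ℝ := α * prelec α p * (-log p) ^ α / (-log p * p)

def prelecDeriv2 (α p : ℝ) : ℝ :=
  α * prelec α p * (-log p) ^ α * (α * (-log p) ^ α + 1 - α + log p) / (-log p * p) ^ 2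

end

lemma mul_rpow_le_add_sub_one {α u : ℝ} (hα₀ : 0 ≤ α) (hα₁ : α ≤ 1) (hu : 1 ≤ u) :
    α * u ^ α ≤ u + α - 1 := by
  have h : α * u ^ α ≤ α * u := mul_le_mul_of_nonneg_left (rpow_le_self_of_one_le hu hα₁) hα₀
  nlinarith

section Derivatives

variable {α x : ℝ}

lemma hasDerivAt_neg_log_rpow (hx : x ≠ 0) (hlog : log x ≠ 0) :
    HasDerivAt (fun p ↦ (-log p) ^ α) (-(α * (-log x) ^ α / (-log x * x))) x := by
  refine ((hasDerivAt_log hx).neg.rpow_const (Or.inl (neg_ne_zero.2 hlog))).congr_deriv ?_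
  rw [Pi.neg_apply, rpow_sub_one (neg_ne_zero.2 hlog)]
  field_simp

lemma hasDerivAt_prelec (hx : x ≠ 0) (hlog : log x ≠ 0) :
    HasDerivAt (prelec α) (prelecDeriv α x) x := by
  refine (hasDerivAt_neg_log_rpow (α := α) hx hlog).neg.exp.congr_deriv ?_
  simp only [prelecDeriv, prelec, Pi.neg_apply]
  ring

lemma hasDerivAt_prelecDeriv (hx : x ≠ 0) (hlog : log x ≠ 0) :
    HasDerivAt (prelecDeriv α) (prelecDeriv2 α x) x := by
  have hu : -log x ≠ 0 := neg_ne_zero.2 hlog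
  have hux : HasDerivAt (fun p ↦ -log p * p) (-1 + -log x) x := by
    refine ((hasDerivAt_log hx).neg.mul (hasDerivAt_id x)).congr_deriv ?_
    simp only [Pi.neg_apply, id]
    field_simp
  refine ((((hasDerivAt_prelec (α := α) hx hlog).const_mul α).mul
    (hasDerivAt_neg_log_rpow hx hlog)).div hux (mul_ne_zero hu hx)).congr_deriv ?_
  simp only [prelecDeriv, prelecDeriv2, Pi.mul_apply]
  field_simp
  ring

end Derivatives

lemma prelecDeriv2_nonpos {α x : ℝ} (hα₀ : 0 ≤ α) (hα₁ : α ≤ 1) (hx : 0 < x)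
    (hxe : x ≤ exp (-1)) : prelecDeriv2 α x ≤ 0 := by
  have hu : 1 ≤ -log x := by linarith [(log_le_iff_le_exp hx).2 hxe]
  have hbracket : α * (-log x) ^ α + 1 - α + log x ≤ 0 := by
    linarith [mul_rpow_le_add_sub_one hα₀ hα₁ hu]
  have hfactor : 0 ≤ α * prelec α x * (-log x) ^ α := by
    unfold prelec
    positivity
  exact div_nonpos_of_nonpos_of_nonneg (mul_nonpos_of_nonneg_of_nonpos hfactor hbracket)
    (sq_nonneg _)

theorem concaveOn_prelec {α : ℝ} (hα₀ : 0 ≤ α) (hα₁ : α ≤ 1) :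
    ConcaveOn ℝ (Ioc 0 (exp (-1))) (prelec α) := by
  have hlog : ∀ x ∈ Ioc 0 (exp (-1)), log x ≠ 0 := fun x hx ↦
    ((log_le_iff_le_exp hx.1).2 hx.2).trans_lt (by norm_num) |>.ne
  refine concaveOn_of_hasDerivWithinAt2_nonpos (f' := prelecDeriv α) (f'' := prelecDeriv2 α)
    (convex_Ioc _ _)
    (fun x hx ↦ (hasDerivAt_prelec hx.1.ne' (hlog x hx)).continuousAt.continuousWithinAt)
    ?_ ?_ ?_ <;> rw [interior_Ioc] <;> intro x hx
  · exact (hasDerivAt_prelec hx.1.ne' (hlog x (Ioo_subset_Ioc_self hx))).hasDerivWithinAt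
  · exact (hasDerivAt_prelecDeriv hx.1.ne' (hlog x (Ioo_subset_Ioc_self hx))).hasDerivWithinAt
  · exact prelecDeriv2_nonpos hα₀ hα₁ hx.1 hx.2.le

/-- The Prelec probability weighting function is concave on (0, 1/e). -/
theorem prelec_concave_below_inv_e
    (α : ℝ) (hα : α ∈ Set.Ioo (0 : ℝ) 1)
    (w : ℝ → ℝ) (hw : ∀ p, w p = Real.exp (-(-Real.log p) ^ α)) :
    ∀ p ∈ Set.Ioo (0 : ℝ) (Real.exp (-1)), ∀ q ∈ Set.Ioo (0 : ℝ) (Real.exp (-1)),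
      ∀ t ∈ Set.Icc (0 : ℝ) 1,
        t * w p + (1 - t) * w q ≤ w (t * p + (1 - t) * q) := by
  obtain rfl : w = prelec α := funext hw
  intro p hp q hq t ht
  simpa only [smul_eq_mul] using (concaveOn_prelec hα.1.le hα.2.le).2 (Ioo_subset_Ioc_self hp)
    (Ioo_subset_Ioc_self hq) ht.1 (sub_nonneg.2 ht.2) (add_sub_cancel t 1)
end

section
/- Let α ∈ (0, 1) and define the Prelec probability weighting function w : ℝ → ℝ by w p = Real.exp (−(−Real.log p) ^ α). Then w is convex on the interval (Real.exp (−1), 1): for all p, q in (e⁻¹, 1) and all t ∈ [0, 1], w (t·p + (1−t)·q) ≤ t · w p + (1−t) · w q. -/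
/-!
Write `u = -log p`, which lies in `(0, 1)` exactly when `p ∈ (1/e, 1)`, and let
`L = w'/w = α u^(α-1) / p` be the logarithmic derivative of `w`. Then
`w'' = w (L² + L') = w · α u^(α-2) / p² · (α u^α + 1 - α - u)`,
and the last factor is nonnegative since `u ≤ u^α` for `u ∈ [0, 1]`, whence
`u = α u + (1 - α) u ≤ α u^α + (1 - α)`.
-/

open Real Set

namespace Prelec

noncomputable def weight (α p : ℝ) : ℝ := exp (-(-log p) ^ α)

noncomputable def weightLogDeriv (α p : ℝ) : ℝ := α * (-log p) ^ (α - 1) / p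

lemma neg_log_mem_Ioo {p : ℝ} (hp : p ∈ Ioo (exp (-1)) 1) : -log p ∈ Ioo 0 1 := by
  have hp₀ : 0 < p := (exp_pos _).trans hp.1
  have hlog₁ : -1 < log p := (lt_log_iff_exp_lt hp₀).2 hp.1
  exact ⟨neg_pos.2 (log_neg hp₀ hp.2), by linarith⟩

lemma hasDerivAt_neg_log_rpow (β : ℝ) {p : ℝ} (hp : p ∈ Ioo 0 1) :
    HasDerivAt (fun x => (-log x) ^ β) (-(β * (-log p) ^ (β - 1) / p)) p := by
  have hu : -log p ≠ 0 := neg_ne_zero.2 (log_neg hp.1 hp.2).ne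
  convert (hasDerivAt_log hp.1.ne').fun_neg.rpow_const (p := β) (Or.inl hu) using 1
  ring

lemma hasDerivAt_weight (α : ℝ) {p : ℝ} (hp : p ∈ Ioo 0 1) :
    HasDerivAt (weight α) (weight α p * weightLogDeriv α p) p := by
  have h := (hasDerivAt_neg_log_rpow α hp).fun_neg.exp
  rwa [neg_neg] at h

lemma hasDerivAt_weightLogDeriv (α : ℝ) {p : ℝ} (hp : p ∈ Ioo 0 1) :
    HasDerivAt (weightLogDeriv α)
      (α * (-log p) ^ (α - 2) / p ^ 2 * (1 - α - -log p)) p := by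
  have hu : 0 < -log p := neg_pos.2 (log_neg hp.1 hp.2)
  have hrpow : (-log p) ^ (α - 1) = (-log p) ^ (α - 2) * -log p := by
    rw [← rpow_add_one hu.ne']
    ring_nf
  refine (((hasDerivAt_neg_log_rpow (α - 1) hp).const_mul α).fun_div (hasDerivAt_id' p)
    hp.1.ne').congr_deriv ?_
  rw [show α - 1 - 1 = α - 2 by ring, hrpow]
  field_simp [hp.1.ne']
  ring

lemma le_mul_rpow_add_one_sub {u α : ℝ} (hu₀ : 0 ≤ u) (hu₁ : u ≤ 1) (hα : α ∈ Icc 0 1) :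
    u ≤ α * u ^ α + (1 - α) := by
  have hle : u ≤ u ^ α := self_le_rpow_of_le_one hu₀ hu₁ hα.2
  linarith [mul_le_mul_of_nonneg_left hle hα.1, mul_nonneg (sub_nonneg.2 hα.2) (sub_nonneg.2 hu₁)]

lemma weightLogDeriv_sq_add_deriv_nonneg {α p : ℝ} (hα : α ∈ Icc 0 1)
    (hp : p ∈ Ioo (exp (-1)) 1) :
    0 ≤ weightLogDeriv α p ^ 2 + α * (-log p) ^ (α - 2) / p ^ 2 * (1 - α - -log p) := by
  obtain ⟨hu₀, hu₁⟩ := neg_log_mem_Ioo hp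
  have hrpow : ((-log p) ^ (α - 1)) ^ 2 = (-log p) ^ (α - 2) * (-log p) ^ α := by
    rw [sq, ← rpow_add hu₀, ← rpow_add hu₀]
    ring_nf
  have hsq : weightLogDeriv α p ^ 2
      = α * (-log p) ^ (α - 2) / p ^ 2 * (α * (-log p) ^ α) := by
    rw [weightLogDeriv, div_pow, mul_pow, hrpow]
    ring
  rw [hsq, ← mul_add]
  have hkey := le_mul_rpow_add_one_sub hu₀.le hu₁.le hα
  exact mul_nonneg (div_nonneg (mul_nonneg hα.1 (rpow_nonneg hu₀.le _)) (sq_nonneg p))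
    (by linarith)

theorem convexOn_weight {α : ℝ} (hα : α ∈ Icc 0 1) :
    ConvexOn ℝ (Ioo (exp (-1)) 1) (weight α) := by
  have hsub : Ioo (exp (-1)) 1 ⊆ Ioo 0 1 := Ioo_subset_Ioo_left (exp_pos _).le
  refine convexOn_of_hasDerivWithinAt2_nonneg (convex_Ioo _ _)
    (f' := fun p => weight α p * weightLogDeriv α p)
    (f'' := fun p => weight α p *
      (weightLogDeriv α p ^ 2 + α * (-log p) ^ (α - 2) / p ^ 2 * (1 - α - -log p)))
    (fun p hp => (hasDerivAt_weight α (hsub hp)).continuousAt.continuousWithinAt)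
    ?_ ?_ ?_ <;> rw [isOpen_Ioo.interior_eq]
  · exact fun p hp => (hasDerivAt_weight α (hsub hp)).hasDerivWithinAt
  · intro p hp
    exact (((hasDerivAt_weight α (hsub hp)).mul
      (hasDerivAt_weightLogDeriv α (hsub hp))).congr_deriv (by ring)).hasDerivWithinAt
  · exact fun p hp => mul_nonneg (exp_pos _).le (weightLogDeriv_sq_add_deriv_nonneg hα hp)

end Prelec

/-- The Prelec probability weighting function is convex on (1/e, 1). -/
theorem prelec_convex_above_inv_e
    (α : ℝ) (hα : α ∈ Set.Ioo (0 : ℝ) 1)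
    (w : ℝ → ℝ) (hw : ∀ p, w p = Real.exp (-(-Real.log p) ^ α)) :
    ∀ p ∈ Set.Ioo (Real.exp (-1)) 1, ∀ q ∈ Set.Ioo (Real.exp (-1)) 1,
      ∀ t ∈ Set.Icc (0 : ℝ) 1,
        w (t * p + (1 - t) * q) ≤ t * w p + (1 - t) * w q := by
  intro p hp q hq t ht
  simp only [hw]
  exact (Prelec.convexOn_weight (Ioo_subset_Icc_self hα)).2 hp hq ht.1 (sub_nonneg.2 ht.2)
    (add_sub_cancel t 1)
end
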